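/- Let L be a basic model, α ≤ κ, and (x_β)_{β<α} a sequence with x_β =_β x_γ and x_β ≥ x_γ whenever β < γ < α. Then the meet x = ⋀_{β<α} x_β satisfies x_β =_β x for all β < α. -/

import Mathlib

/-- A *basic model*: a complete lattice `L` equipped with preorders `sq α` (written `⊑_α`)
for each ordinal `α < κ`, together with the relative least-upper-bound operation `lub α X`
(written `⊔_α X`), satisfying the four basic-model axioms. -/
structure BasicModel (L : Type*) [CompleteLattice L] (κ : Ordinal) where
  sq : Ordinal → L → L → Prop
  lub : Ordinal → Set L → L
  sq_refl : ∀ {α : Ordinal}, α < κ → ∀ x, sq α x x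
  sq_trans : ∀ {α : Ordinal}, α < κ → ∀ {x y z : L}, sq α x y → sq α y z → sq α x z
  ax1 : ∀ {α β : Ordinal}, α < β → β < κ → ∀ {x y : L}, sq β x y → sq α x y ∧ sq α y x
  ax2 : ∀ {x y : L}, (∀ α, α < κ → sq α x y ∧ sq α y x) → x = y
  ax3_ub : ∀ {α : Ordinal}, α < κ → ∀ (x : L) (X : Set L),
      X ⊆ {y | ∀ β < α, sq β x y ∧ sq β y x} → ∀ z ∈ X, sq α z (lub α X)
  ax3_least : ∀ {α : Ordinal}, α < κ → ∀ (x : L) (X : Set L),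
      X ⊆ {y | ∀ β < α, sq β x y ∧ sq β y x} →
      ∀ z : L, (∀ β < α, sq β x z ∧ sq β z x) → (∀ w ∈ X, sq α w z) →
        sq α (lub α X) z ∧ lub α X ≤ z
  ax4 : ∀ {α : Ordinal}, α < κ → ∀ (S : Set (L × L)), (∀ p ∈ S, sq α p.1 p.2) →
      sq α (sSup (Prod.fst '' S)) (sSup (Prod.snd '' S))

namespace BasicModel

variable {L : Type*} [CompleteLattice L] {κ : Ordinal}

/-- `x =_α y`. -/
def eqAt (B : BasicModel L κ) (α : Ordinal) (x y : L) : Prop :=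
  B.sq α x y ∧ B.sq α y x

/-- The set `(x]_α = {y | ∀ β < α, x =_β y}`. -/
def cone (B : BasicModel L κ) (α : Ordinal) (x : L) : Set L :=
  {y | ∀ β < α, B.eqAt β x y}

/-- The α-restriction `x|_α = ⊔_α {x}`. -/
def restrict (B : BasicModel L κ) (α : Ordinal) (x : L) : L :=
  B.lub α {x}

/-- `x ⊏_α y`: `x ⊑_α y` but not `x =_α y`. -/
def ltAt (B : BasicModel L κ) (α : Ordinal) (x y : L) : Prop :=
  B.sq α x y ∧ ¬ B.eqAt α x y

/-- The global relation `⊑`: `x ⊑ y` iff `x = y` or `x ⊏_α y` for some `α < κ`. -/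
def sqle (B : BasicModel L κ) (x y : L) : Prop :=
  x = y ∨ ∃ α < κ, B.ltAt α x y

/-- `g : A → B` is α-monotonic. -/
def MonotonicAt {A B : Type*} [CompleteLattice A] [CompleteLattice B]
    (BA : BasicModel A κ) (BB : BasicModel B κ) (α : Ordinal) (g : A → B) : Prop :=
  ∀ x y : A, BA.sq α x y → BB.sq α (g x) (g y)

end BasicModel

/-!
Since the sequence decreases, cutting it off below `β` does not change its meet, and the tail
`X = {x δ | β ≤ δ < α}` is pairwise `=_β`-equal. For such a set the relative supremum
`u = ⊔_β X` is `=_β x β` and lies below every element of `X`, so `u ≤ ⋀ X ≤ x β`, and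
join-monotonicity of `⊑_β` squeezes `⋀ X` into the `=_β`-class of `x β`.
-/

theorem sInf_image_Iio_eq_sInf_image_Ico {L : Type*} [CompleteLattice L] (x : Ordinal → L)
    {α β : Ordinal} (hβ : β < α) (hge : ∀ γ < β, x β ≤ x γ) :
    sInf (x '' Set.Iio α) = sInf (x '' Set.Ico β α) := by
  refine le_antisymm (sInf_le_sInf (Set.image_mono fun _ h => h.2)) (le_sInf ?_)
  rintro _ ⟨γ, hγ, rfl⟩
  rcases lt_or_ge γ β with hγβ | hβγ
  · exact (sInf_le (Set.mem_image_of_mem x (Set.left_mem_Ico.mpr hβ))).trans (hge γ hγβ)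
  · exact sInf_le (Set.mem_image_of_mem x (Set.mem_Ico.mpr ⟨hβγ, hγ⟩))

namespace BasicModel

variable {L : Type*} [CompleteLattice L] {κ : Ordinal} {B : BasicModel L κ}
  {α β : Ordinal} {x y z : L}

theorem eqAt_refl (hα : α < κ) (x : L) : B.eqAt α x x :=
  ⟨B.sq_refl hα x, B.sq_refl hα x⟩

theorem eqAt.symm (h : B.eqAt α x y) : B.eqAt α y x :=
  ⟨h.2, h.1⟩

theorem eqAt.mono (h : B.eqAt β x y) (hαβ : α ≤ β) (hβ : β < κ) : B.eqAt α x y := by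
  rcases hαβ.lt_or_eq with hlt | rfl
  · exact ⟨(B.ax1 hlt hβ h.1).1, (B.ax1 hlt hβ h.2).1⟩
  · exact h

theorem sq_sup_right (hα : α < κ) (h : B.sq α x y) (z : L) : B.sq α (x ⊔ z) (y ⊔ z) := by
  have hS : ∀ p ∈ ({(x, y), (z, z)} : Set (L × L)), B.sq α p.1 p.2 := by
    rintro p (rfl | rfl)
    exacts [h, B.sq_refl hα z]
  simpa [Set.image_insert_eq, sSup_pair] using B.ax4 hα _ hS

theorem eqAt_of_le_of_le (hα : α < κ) (h : B.eqAt α x z) (hxy : x ≤ y) (hyz : y ≤ z) :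
    B.eqAt α y z := by
  have h₁ := sq_sup_right hα h.1 y
  have h₂ := sq_sup_right hα h.2 y
  rw [sup_eq_right.mpr hxy, sup_eq_left.mpr hyz] at h₁ h₂
  exact ⟨h₁, h₂⟩

theorem eqAt_sInf (hα : α < κ) {X : Set L} (hX : ∀ y ∈ X, ∀ z ∈ X, B.eqAt α y z)
    (hx : x ∈ X) : B.eqAt α x (sInf X) := by
  have hcone : X ⊆ B.cone α x := fun y hy β hβ => (hX x hx y hy).mono hβ.le hα
  have hupper : B.sq α x (B.lub α X) := B.ax3_ub hα x X hcone x hx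
  have hleast : ∀ z ∈ X, B.sq α (B.lub α X) z ∧ B.lub α X ≤ z := fun z hz =>
    B.ax3_least hα x X hcone z (hcone hz) fun w hw => (hX w hw z hz).1
  have hlub_le : B.lub α X ≤ sInf X := le_sInf fun z hz => (hleast z hz).2
  have hx_lub : B.eqAt α x (B.lub α X) := ⟨hupper, (hleast x hx).1⟩
  exact (eqAt_of_le_of_le hα hx_lub.symm hlub_le (sInf_le hx)).symm

theorem eqAt_of_mem_image_Ico (hα : α ≤ κ) {x : Ordinal → L}
    (heq : ∀ β γ : Ordinal, β < γ → γ < α → B.eqAt β (x β) (x γ)) :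
    ∀ y ∈ x '' Set.Ico β α, ∀ z ∈ x '' Set.Ico β α, B.eqAt β y z := by
  suffices h : ∀ δ δ', β ≤ δ → δ ≤ δ' → δ' < α → B.eqAt β (x δ) (x δ') by
    rintro _ ⟨δ, ⟨hβδ, hδ⟩, rfl⟩ _ ⟨δ', ⟨hβδ', hδ'⟩, rfl⟩
    rcases le_total δ δ' with hle | hle
    exacts [h δ δ' hβδ hle hδ', (h δ' δ hβδ' hle hδ).symm]
  intro δ δ' hβδ hle hδ'
  rcases hle.lt_or_eq with hlt | rfl
  · exact (heq δ δ' hlt hδ').mono hβδ ((hlt.trans hδ').trans_le hα)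
  · exact eqAt_refl ((hβδ.trans_lt hδ').trans_le hα) _

end BasicModel

open BasicModel in
/-- if `(x β)_{β<α}` is a sequence in a basic model with `x β =_β x γ` and
`x β ≥ x γ` for `β < γ < α` (where `α ≤ κ`), then the meet `x = ⋀_{β<α} x β` satisfies
`x β =_β x` for all `β < α`. -/
theorem stmt_16 {L : Type*} [CompleteLattice L] {κ : Ordinal} (B : BasicModel L κ)
    {α : Ordinal} (hα : α ≤ κ) (x : Ordinal → L)
    (heq : ∀ β γ : Ordinal, β < γ → γ < α → B.eqAt β (x β) (x γ))
    (hge : ∀ β γ : Ordinal, β < γ → γ < α → x γ ≤ x β) :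
    ∀ β < α, B.eqAt β (x β) (sInf (x '' {β : Ordinal | β < α})) := by
  intro β hβ
  rw [show {β : Ordinal | β < α} = Set.Iio α from rfl,
    sInf_image_Iio_eq_sInf_image_Ico x hβ fun γ hγ => hge γ β hγ hβ]
  exact eqAt_sInf (hβ.trans_le hα) (eqAt_of_mem_image_Ico hα heq)
    (Set.mem_image_of_mem x (Set.left_mem_Ico.mpr hβ))
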